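/- For all integers m, k ≥ 0 and all complex x, y with x + y = 1, x^(m+1) Σ_{i=0}^{k} C(m+i, m) y^i + y^(k+1) Σ_{i=0}^{m} C(k+i, k) x^i = 1. -/
import Mathlib

lemma cb_aux (k : ℕ) (x y : ℂ) (h : x + y = 1) : ∀ m : ℕ,
    ∑ i ∈ Finset.range (m + 1), (Nat.choose (k + i) k : ℂ) * x ^ i
    - y * ∑ i ∈ Finset.range (m + 1), (Nat.choose (k + 1 + i) (k + 1) : ℂ) * x ^ i
    = (Nat.choose (m + k + 1) (k + 1) : ℂ) * x ^ (m + 1) := by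
  intro m
  induction m with
  | zero => simp; linear_combination -h
  | succ m ih =>
      rw [Finset.sum_range_succ (fun i => ((Nat.choose (k + i) k : ℂ) * x ^ i)) (m + 1),
        Finset.sum_range_succ (fun i => ((Nat.choose (k + 1 + i) (k + 1) : ℂ) * x ^ i)) (m + 1)]
      have pascal : Nat.choose (m + k + 2) (k + 1)
          = Nat.choose (m + k + 1) k + Nat.choose (m + k + 1) (k + 1) :=
        Nat.choose_succ_succ (m + k + 1) k
      have h1 : (k + (m + 1)) = m + k + 1 := by omega
      have h2 : (k + 1 + (m + 1)) = m + k + 2 := by omega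
      have h3 : (m + 1 + k + 1) = m + k + 2 := by omega
      simp only [h1, h2, h3, pascal]
      push_cast
      linear_combination ih
        - ((Nat.choose (m + k + 1) k : ℂ) + (Nat.choose (m + k + 1) (k + 1) : ℂ))
          * x ^ (m + 1) * h

theorem chaundy_bullard_complex (m k : ℕ) (x y : ℂ) (h : x + y = 1) :
    x ^ (m + 1) * ∑ i ∈ Finset.range (k + 1), (Nat.choose (m + i) m : ℂ) * y ^ i
    + y ^ (k + 1) * ∑ i ∈ Finset.range (m + 1), (Nat.choose (k + i) k : ℂ) * x ^ i
    = 1 := by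
  induction k with
  | zero =>
      simp only [Finset.range_one, Finset.sum_singleton, Nat.add_zero, Nat.choose_self,
        Nat.cast_one, pow_zero, mul_one, Nat.zero_add, Nat.choose_zero_right, one_mul,
        pow_one, Nat.choose_zero_right]
      have geo := geom_sum_mul x (m + 1)
      linear_combination -geo + (∑ i ∈ Finset.range (m + 1), x ^ i) * h
  | succ k ih =>
      have aux := cb_aux k x y h m
      rw [Finset.sum_range_succ]
      have hsym : Nat.choose (m + (k + 1)) m = Nat.choose (m + k + 1) (k + 1) := by
        rw [← Nat.choose_symm (by omega : m ≤ m + (k + 1))]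
        congr 1
        omega
      rw [hsym]
      linear_combination ih - y ^ (k + 1) * aux
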